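/- arXiv:2510.16637 — 5 statements merged into one kernel-verified Lean document; each statement's English description precedes it below -/
import Mathlib

section
/- The smoothed ℓ0 function S_σ(x) = Σ_{i=1}^N (1 − exp(−xᵢ²/(2σ²))) on ℝ^N is convex on the box {x : ‖x‖_∞ ≤ x_m} whenever σ ≥ x_m. -/
/-!
The function is a sum of one-variable functions of the coordinates. The summand
`1 - exp (-t² / 2σ²)` has second derivative `(σ² - t²) / σ⁴ · exp (-t² / 2σ²)`, nonnegative for
`|t| ≤ σ`, so it is convex on `[-σ, σ] ⊇ [-x_m, x_m]`; a sum of convex functions of separate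
coordinates is convex on the product of the intervals, which is the box.
-/

open Set Real

lemma ConvexOn.finset_sum {𝕜 E β ι : Type*} [Semiring 𝕜] [PartialOrder 𝕜]
    [AddCommMonoid E] [AddCommMonoid β] [PartialOrder β] [IsOrderedAddMonoid β] [SMul 𝕜 E]
    [Module 𝕜 β] {s : Set E} (hs : Convex 𝕜 s) {t : Finset ι} {f : ι → E → β}
    (hf : ∀ i ∈ t, ConvexOn 𝕜 s (f i)) : ConvexOn 𝕜 s (∑ i ∈ t, f i) :=
  Finset.sum_induction _ (ConvexOn 𝕜 s) (fun _ _ => ConvexOn.add) (convexOn_const 0 hs) hf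

lemma ConvexOn.sum_comp_eval {𝕜 E β ι : Type*} [Fintype ι] [Semiring 𝕜] [PartialOrder 𝕜]
    [AddCommMonoid E] [AddCommMonoid β] [PartialOrder β] [IsOrderedAddMonoid β] [Module 𝕜 E]
    [Module 𝕜 β] {s : ι → Set E} {g : ι → E → β} (hs : ∀ i, Convex 𝕜 (s i))
    (hg : ∀ i, ConvexOn 𝕜 (s i) (g i)) :
    ConvexOn 𝕜 (univ.pi s) (fun x => ∑ i, g i (x i)) := by
  have hpi : Convex 𝕜 (univ.pi s) := convex_pi fun i _ => hs i
  have hproj (i : ι) : univ.pi s ⊆ LinearMap.proj (R := 𝕜) i ⁻¹' s i :=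
    fun _ hx => hx i (mem_univ i)
  convert ConvexOn.finset_sum hpi (t := Finset.univ) fun i _ =>
    ((hg i).comp_linearMap (LinearMap.proj i)).subset (hproj i) hpi using 1
  ext x
  simp only [Finset.sum_apply, Function.comp_apply, LinearMap.proj_apply]

lemma hasDerivAt_neg_sq_div (c t : ℝ) :
    HasDerivAt (fun t => -t ^ 2 / c) (-(2 * t) / c) t := by
  simpa using (hasDerivAt_pow 2 t).neg.div_const c

lemma hasDerivAt_one_sub_exp_neg_sq_div {σ : ℝ} (hσ : σ ≠ 0) (t : ℝ) :
    HasDerivAt (fun t => 1 - exp (-t ^ 2 / (2 * σ ^ 2)))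
      (t / σ ^ 2 * exp (-t ^ 2 / (2 * σ ^ 2))) t := by
  have := ((hasDerivAt_neg_sq_div (2 * σ ^ 2) t).exp).const_sub 1
  refine this.congr_deriv ?_
  field_simp

lemma hasDerivAt_div_sq_mul_exp_neg_sq_div {σ : ℝ} (hσ : σ ≠ 0) (t : ℝ) :
    HasDerivAt (fun t => t / σ ^ 2 * exp (-t ^ 2 / (2 * σ ^ 2)))
      ((σ ^ 2 - t ^ 2) / σ ^ 4 * exp (-t ^ 2 / (2 * σ ^ 2))) t := by
  have := ((hasDerivAt_id' t).div_const (σ ^ 2)).mul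
    ((hasDerivAt_neg_sq_div (2 * σ ^ 2) t).exp)
  refine this.congr_deriv ?_
  field_simp
  ring

lemma convexOn_one_sub_exp_neg_sq_div {σ : ℝ} (hσ : 0 < σ) :
    ConvexOn ℝ (Icc (-σ) σ) (fun t => 1 - exp (-t ^ 2 / (2 * σ ^ 2))) := by
  refine convexOn_of_hasDerivWithinAt2_nonneg (convex_Icc _ _) (by fun_prop)
    (fun t _ => (hasDerivAt_one_sub_exp_neg_sq_div hσ.ne' t).hasDerivWithinAt)
    (fun t _ => (hasDerivAt_div_sq_mul_exp_neg_sq_div hσ.ne' t).hasDerivWithinAt) ?_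
  intro t ht
  rw [interior_Icc] at ht
  have : 0 ≤ σ ^ 2 - t ^ 2 := sub_nonneg.2 (sq_le_sq' ht.1.le ht.2.le)
  positivity

theorem sl0_convexOn_box_general (N : ℕ) (σ xm : ℝ) (hσ : 0 < σ) (h : σ ≥ xm) :
    ConvexOn ℝ {x : Fin N → ℝ | ∀ i, |x i| ≤ xm}
      (fun x => ∑ i : Fin N, (1 - Real.exp (-(x i) ^ 2 / (2 * σ ^ 2)))) := by
  have hbox : {x : Fin N → ℝ | ∀ i, |x i| ≤ xm} = univ.pi fun _ => Icc (-xm) xm := by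
    ext x
    simp only [mem_univ_pi, mem_Icc, abs_le]
    rfl
  rw [hbox]
  exact ConvexOn.sum_comp_eval (fun _ => convex_Icc _ _) fun _ =>
    (convexOn_one_sub_exp_neg_sq_div hσ).subset (Icc_subset_Icc (neg_le_neg h) h) (convex_Icc _ _)

theorem sl0_convexOn_box (N : ℕ) (σ xm : ℝ) (hσ : 0 < σ) (hxm : 0 ≤ xm) (h : σ ≥ xm) :
    ConvexOn ℝ {x : Fin N → ℝ | ∀ i, |x i| ≤ xm}
      (fun x => ∑ i : Fin N, (1 - Real.exp (-(x i) ^ 2 / (2 * σ ^ 2)))) :=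
  sl0_convexOn_box_general N σ xm hσ h
end

section
/- The overlapping group smoothed ℓ0 function r(x) = Σ_{b=0}^{n_g−1} (1 − exp(−(Σ_{i=0}^{n_v−1} x_{sb+i}²)/(2σ²))) with group size n_v and overlap stride s ≤ n_v is convex on the box {x : ‖x‖_∞ ≤ x_m} whenever σ ≥ x_m·√(2n_v − 1). -/
open Finset Set

/-- Concavity of a Gaussian of a quadratic on `[0,1]` when the derivative bound holds. -/
lemma gauss_concave_aux {A B C σ : ℝ} (hσ : 0 < σ)
    (hAB : ∀ t ∈ Set.Icc (0:ℝ) 1, (2*A*t + B)^2 ≤ 4*σ^2*A) :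
    ConcaveOn ℝ (Set.Icc (0:ℝ) 1)
      (fun t => Real.exp (-(A*t^2 + B*t + C)/(2*σ^2))) := by
  have hσ2 : (0:ℝ) < 2*σ^2 := by positivity
  set u : ℝ → ℝ := fun t => -(A*t^2 + B*t + C)/(2*σ^2) with hu_def
  have hu : ∀ t : ℝ, HasDerivAt u (-(2*A*t + B)/(2*σ^2)) t := by
    intro t
    have h1 : HasDerivAt (fun t : ℝ => A*t^2 + B*t + C) (2*A*t + B) t := by
      have := (((hasDerivAt_pow 2 t).const_mul A).add
        ((hasDerivAt_id t).const_mul B)).add_const C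
      refine this.congr_deriv ?_
      ring
    have := (h1.neg).div_const (2*σ^2)
    exact this
  have hf : ∀ t : ℝ, HasDerivAt (fun t => Real.exp (u t))
      (Real.exp (u t) * (-(2*A*t + B)/(2*σ^2))) t := fun t => (hu t).exp
  have hf' : ∀ t : ℝ, HasDerivAt (fun t => Real.exp (u t) * (-(2*A*t + B)/(2*σ^2)))
      (Real.exp (u t) * ((2*A*t + B)^2/(2*σ^2)^2 - 2*A/(2*σ^2))) t := by
    intro t
    have h2 : HasDerivAt (fun t : ℝ => -(2*A*t + B)/(2*σ^2)) (-(2*A)/(2*σ^2)) t := by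
      have : HasDerivAt (fun t : ℝ => 2*A*t + B) (2*A) t := by
        simpa using ((hasDerivAt_id t).const_mul (2*A)).add_const B
      have := (this.neg).div_const (2*σ^2)
      exact this
    have := (hf t).mul h2
    refine this.congr_deriv ?_
    field_simp
    ring
  apply concaveOn_of_hasDerivWithinAt2_nonpos (f' := fun t =>
      Real.exp (u t) * (-(2*A*t + B)/(2*σ^2)))
    (f'' := fun t => Real.exp (u t) * ((2*A*t + B)^2/(2*σ^2)^2 - 2*A/(2*σ^2)))
    (convex_Icc 0 1)
  · exact (Real.continuous_exp.comp (by fun_prop)).continuousOn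
  · exact fun t ht => (hf t).hasDerivWithinAt
  · exact fun t ht => (hf' t).hasDerivWithinAt
  · intro t ht
    have ht' : t ∈ Set.Icc (0:ℝ) 1 := interior_subset ht
    have hb := hAB t ht'
    have hexp : 0 < Real.exp (u t) := Real.exp_pos _
    have : (2*A*t + B)^2/(2*σ^2)^2 - 2*A/(2*σ^2) ≤ 0 := by
      rw [sub_nonpos, div_le_div_iff₀ (by positivity) (by positivity)]
      nlinarith [mul_le_mul_of_nonneg_right hb hσ2.le]
    exact mul_nonpos_of_nonneg_of_nonpos hexp.le this

lemma box_convex (xm : ℝ) : Convex ℝ {x : ℕ → ℝ | ∀ i, |x i| ≤ xm} := by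
  intro x hx y hy a b ha hb hab i
  have hxi := hx i
  have hyi := hy i
  have : |(a • x + b • y) i| = |a * x i + b * y i| := by
    simp [Pi.add_apply, Pi.smul_apply, smul_eq_mul]
  rw [this]
  calc |a * x i + b * y i| ≤ |a * x i| + |b * y i| := abs_add_le _ _
    _ = a * |x i| + b * |y i| := by
        rw [abs_mul, abs_mul, abs_of_nonneg ha, abs_of_nonneg hb]
    _ ≤ a * xm + b * xm := by
        gcongr
    _ = xm := by rw [← add_mul, hab, one_mul]

/-- Convexity of a single (smoothed ℓ0) group term on the box. -/
lemma group_convexOn (n o : ℕ) (σ xm : ℝ) (hσ : 0 < σ) (hxm : 0 ≤ xm)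
    (hn : (n : ℝ) * xm^2 ≤ σ^2) :
    ConvexOn ℝ {x : ℕ → ℝ | ∀ i, |x i| ≤ xm}
      (fun x : ℕ → ℝ =>
        1 - Real.exp (-(∑ i ∈ Finset.range n, x (o + i) ^ 2) / (2 * σ ^ 2))) := by
  refine ⟨box_convex xm, ?_⟩
  intro x hx y hy a b ha hb hab
  set d : ℕ → ℝ := fun i => y i - x i with hd_def
  set A : ℝ := ∑ i ∈ Finset.range n, d (o + i) ^ 2 with hA_def
  set B : ℝ := ∑ i ∈ Finset.range n, 2 * x (o + i) * d (o + i) with hB_def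
  set C : ℝ := ∑ i ∈ Finset.range n, x (o + i) ^ 2 with hC_def
  have hq : ∀ t : ℝ, A*t^2 + B*t + C
      = ∑ i ∈ Finset.range n, (x (o + i) + t * d (o + i))^2 := by
    intro t
    rw [hA_def, hB_def, hC_def, Finset.sum_mul, Finset.sum_mul,
      ← Finset.sum_add_distrib, ← Finset.sum_add_distrib]
    exact Finset.sum_congr rfl fun i _ => by ring
  have hA : 0 ≤ A := Finset.sum_nonneg fun i _ => sq_nonneg _
  have hbound : ∀ t ∈ Set.Icc (0:ℝ) 1, (2*A*t + B)^2 ≤ 4*σ^2*A := by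
    intro t ht
    have hz : ∀ i ∈ Finset.range n, (x (o + i) + t * d (o + i))^2 ≤ xm^2 := by
      intro i _
      have hxi := hx (o + i)
      have hyi := hy (o + i)
      have habs : |x (o + i) + t * d (o + i)| ≤ xm := by
        have heq : x (o + i) + t * d (o + i)
            = (1 - t) * x (o + i) + t * y (o + i) := by
          simp only [hd_def]
          try ring
        rw [heq]
        calc |(1 - t) * x (o + i) + t * y (o + i)|
            ≤ |(1 - t) * x (o + i)| + |t * y (o + i)| := abs_add_le _ _
          _ = (1 - t) * |x (o + i)| + t * |y (o + i)| := by
              rw [abs_mul, abs_mul, abs_of_nonneg (by linarith [ht.2]),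
                abs_of_nonneg ht.1]
          _ ≤ (1 - t) * xm + t * xm := by
              have h1 : (0:ℝ) ≤ 1 - t := by linarith [ht.2]
              have h0 : (0:ℝ) ≤ t := ht.1
              gcongr
          _ = xm := by ring
      nlinarith [abs_nonneg (x (o + i) + t * d (o + i)),
        sq_abs (x (o + i) + t * d (o + i))]
    have hz2 : ∑ i ∈ Finset.range n, (x (o + i) + t * d (o + i))^2 ≤ (n:ℝ) * xm^2 := by
      calc ∑ i ∈ Finset.range n, (x (o + i) + t * d (o + i))^2
          ≤ ∑ _i ∈ Finset.range n, xm^2 := Finset.sum_le_sum hz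
        _ = (n:ℝ) * xm^2 := by simp [Finset.sum_const, Finset.card_range]; try ring
    have h2 : 2*A*t + B
        = ∑ i ∈ Finset.range n, 2*(x (o + i) + t * d (o + i)) * d (o + i) := by
      rw [hA_def, hB_def, Finset.mul_sum, Finset.sum_mul, ← Finset.sum_add_distrib]
      exact Finset.sum_congr rfl fun i _ => by ring
    have cs := Finset.sum_mul_sq_le_sq_mul_sq (Finset.range n)
      (fun i => x (o + i) + t * d (o + i)) (fun i => d (o + i))
    have h3 : ∑ i ∈ Finset.range n, 2*(x (o + i) + t * d (o + i)) * d (o + i)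
        = 2 * ∑ i ∈ Finset.range n, (x (o + i) + t * d (o + i)) * d (o + i) := by
      rw [Finset.mul_sum]
      exact Finset.sum_congr rfl fun i _ => by ring
    rw [h2, h3]
    have hσ2 : (n:ℝ) * xm^2 ≤ σ^2 := hn
    nlinarith [cs, hz2, hA, sq_nonneg (∑ i ∈ Finset.range n,
      (x (o + i) + t * d (o + i)) * d (o + i))]
  have hconc := gauss_concave_aux hσ hbound (C := C)
  have h0 : (0:ℝ) ∈ Set.Icc (0:ℝ) 1 := by constructor <;> norm_num
  have h1 : (1:ℝ) ∈ Set.Icc (0:ℝ) 1 := by constructor <;> norm_num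
  have hkey := hconc.2 h0 h1 ha hb hab
  simp only [smul_eq_mul] at hkey
  have e0 : A*(0:ℝ)^2 + B*0 + C = ∑ i ∈ Finset.range n, x (o + i)^2 := by
    rw [hq 0]; exact Finset.sum_congr rfl fun i _ => by ring
  have e1 : A*(1:ℝ)^2 + B*1 + C = ∑ i ∈ Finset.range n, y (o + i)^2 := by
    rw [hq 1]
    refine Finset.sum_congr rfl fun i _ => ?_
    simp only [hd_def]; ring
  have eb : A*(a*0 + b*1)^2 + B*(a*0 + b*1) + C
      = ∑ i ∈ Finset.range n, ((a • x + b • y) (o + i))^2 := by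
    rw [hq (a*0 + b*1)]
    refine Finset.sum_congr rfl fun i _ => ?_
    simp only [hd_def, Pi.add_apply, Pi.smul_apply, smul_eq_mul]
    have : a = 1 - b := by linarith
    rw [this]; ring
  rw [e0, e1, eb] at hkey
  simp only [smul_eq_mul]
  have goal' : a * Real.exp (-(∑ i ∈ Finset.range n, x (o + i)^2)/(2*σ^2))
      + b * Real.exp (-(∑ i ∈ Finset.range n, y (o + i)^2)/(2*σ^2))
      ≤ Real.exp (-(∑ i ∈ Finset.range n, ((a • x + b • y) (o + i))^2)/(2*σ^2)) := hkey
  linarith [goal']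

theorem osl0_convexOn_box (n_g n_v s : ℕ) (hnv : 1 ≤ n_v) (hs : 1 ≤ s) (hsn : s ≤ n_v)
    (σ xm : ℝ) (hσ : 0 < σ) (hxm : 0 ≤ xm)
    (h : σ ≥ xm * Real.sqrt (2 * (n_v : ℝ) - 1)) :
    ConvexOn ℝ {x : ℕ → ℝ | ∀ i, |x i| ≤ xm}
      (fun x : ℕ → ℝ => ∑ b ∈ Finset.range n_g,
        (1 - Real.exp (-(∑ i ∈ Finset.range n_v, x (s * b + i) ^ 2) / (2 * σ ^ 2)))) := by
  have hnv' : (1:ℝ) ≤ (n_v : ℝ) := by exact_mod_cast hnv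
  have hsq : (n_v : ℝ) * xm^2 ≤ σ^2 := by
    have hnn : (0:ℝ) ≤ 2 * (n_v : ℝ) - 1 := by linarith
    have h1 : (xm * Real.sqrt (2 * (n_v : ℝ) - 1))^2 ≤ σ^2 := by
      have hge : 0 ≤ xm * Real.sqrt (2 * (n_v : ℝ) - 1) :=
        mul_nonneg hxm (Real.sqrt_nonneg _)
      nlinarith [h]
    have h2 : (xm * Real.sqrt (2 * (n_v : ℝ) - 1))^2 = xm^2 * (2 * (n_v : ℝ) - 1) := by
      rw [mul_pow, Real.sq_sqrt hnn]
    nlinarith [sq_nonneg xm]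
  have hgroup : ∀ b : ℕ, ConvexOn ℝ {x : ℕ → ℝ | ∀ i, |x i| ≤ xm}
      (fun x : ℕ → ℝ =>
        1 - Real.exp (-(∑ i ∈ Finset.range n_v, x (s * b + i) ^ 2) / (2 * σ ^ 2))) :=
    fun b => group_convexOn n_v (s * b) σ xm hσ hxm hsq
  classical
  induction n_g with
  | zero => simpa using convexOn_const 0 (box_convex xm)
  | succ m ih =>
      have : (fun x : ℕ → ℝ => ∑ b ∈ Finset.range (m+1),
          (1 - Real.exp (-(∑ i ∈ Finset.range n_v, x (s * b + i) ^ 2) / (2 * σ ^ 2))))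
          = fun x : ℕ → ℝ => (∑ b ∈ Finset.range m,
          (1 - Real.exp (-(∑ i ∈ Finset.range n_v, x (s * b + i) ^ 2) / (2 * σ ^ 2))))
          + (1 - Real.exp (-(∑ i ∈ Finset.range n_v, x (s * m + i) ^ 2) / (2 * σ ^ 2))) := by
        funext x
        rw [Finset.sum_range_succ]
      rw [this]
      exact ih.add (hgroup m)
end

section
/- The single-group smoothed ℓ0 function f(x) = 1 − exp(−‖x‖₂²/(2σ²)) on ℝⁿ is convex on the set {x : ‖x‖₂² ≤ σ²}. -/
open Real Set

/-! Along a line `t ↦ z t = x + t • v` the function is `1 - exp (-u)` with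
`u = ‖z‖² / (2σ²)`, and `(1 - exp (-u))'' = (u'' - u'²) exp (-u)`. Here `u' = ⟪z, v⟫ / σ²` and
`u'' = ‖v‖² / σ²`, so Cauchy–Schwarz `⟪z, v⟫² ≤ ‖z‖² ‖v‖²` gives `u'² ≤ u''` wherever
`‖z‖² ≤ σ²`. A function convex along every line through a set is convex on it. -/

section Line

variable {𝕜 E β : Type*} [Ring 𝕜] [PartialOrder 𝕜] [AddCommGroup E] [Module 𝕜 E]

theorem Convex.setOf_add_smul_mem {s : Set E} (hs : Convex 𝕜 s) (x v : E) :
    Convex 𝕜 {t : 𝕜 | x + t • v ∈ s} := by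
  intro t₁ h₁ t₂ h₂ a b ha hb hab
  have hcomb : x + (a • t₁ + b • t₂) • v = a • (x + t₁ • v) + b • (x + t₂ • v) := calc
    _ = (a + b) • x + (a • t₁ + b • t₂) • v := by rw [hab, one_smul]
    _ = _ := by simp only [add_smul, smul_add, smul_smul, smul_eq_mul]; abel
  simpa only [mem_ofPred_eq, hcomb] using hs h₁ h₂ ha hb hab

theorem convexOn_of_forall_convexOn_comp_line [AddCommMonoid β] [PartialOrder β] [SMul 𝕜 β]
    {s : Set E} {f : E → β}
    (h : ∀ x ∈ s, ∀ v : E, ConvexOn 𝕜 {t : 𝕜 | x + t • v ∈ s} (fun t => f (x + t • v))) :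
    ConvexOn 𝕜 s f := by
  have hseg (x y : E) (a b : 𝕜) (hab : a + b = 1) : x + b • (y - x) = a • x + b • y := by
    calc _ = (a + b) • x + b • (y - x) := by rw [hab, one_smul]
      _ = _ := by rw [add_smul, smul_sub]; abel
  have h₀ {x : E} (y : E) (hx : x ∈ s) : (0 : 𝕜) ∈ {t : 𝕜 | x + t • (y - x) ∈ s} := by
    simpa using hx
  have h₁ (x : E) {y : E} (hy : y ∈ s) : (1 : 𝕜) ∈ {t : 𝕜 | x + t • (y - x) ∈ s} := by
    simpa using hy
  refine ⟨fun x hx y hy a b ha hb hab => ?_, fun x hx y hy a b ha hb hab => ?_⟩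
  · simpa [hseg x y a b hab] using (h x hx (y - x)).1 (h₀ y hx) (h₁ x hy) ha hb hab
  · simpa [hseg x y a b hab] using (h x hx (y - x)).2 (h₀ y hx) (h₁ x hy) ha hb hab

end Line

theorem convexOn_one_sub_exp_neg {D : Set ℝ} (hD : Convex ℝ D) {u u' u'' : ℝ → ℝ}
    (hu : ∀ t, HasDerivAt u (u' t) t) (hu' : ∀ t, HasDerivAt u' (u'' t) t)
    (h : ∀ t ∈ interior D, u' t ^ 2 ≤ u'' t) :
    ConvexOn ℝ D (fun t => 1 - exp (-u t)) := by
  have hf' (t : ℝ) : HasDerivAt (fun t => 1 - exp (-u t)) (u' t * exp (-u t)) t :=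
    ((hu t).fun_neg.exp.const_sub 1).congr_deriv (by ring)
  have hf'' (t : ℝ) : HasDerivAt (fun t => u' t * exp (-u t))
      ((u'' t - u' t ^ 2) * exp (-u t)) t :=
    ((hu' t).mul (hu t).fun_neg.exp).congr_deriv (by ring)
  exact convexOn_of_hasDerivWithinAt2_nonneg hD
    (fun t _ => (hf' t).continuousAt.continuousWithinAt) (fun t _ => (hf' t).hasDerivWithinAt)
    (fun t _ => (hf'' t).hasDerivWithinAt)
    (fun t ht => mul_nonneg (sub_nonneg.2 (h t ht)) (exp_pos _).le)

section InnerProductSpace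

variable {E : Type*} [NormedAddCommGroup E] [InnerProductSpace ℝ E]

theorem convex_setOf_norm_sq_le (σ : ℝ) : Convex ℝ {x : E | ‖x‖ ^ 2 ≤ σ ^ 2} := by
  convert convex_closedBall (0 : E) |σ| using 1
  ext x
  simp [sq_le_sq]

theorem convexOn_one_sub_exp_neg_norm_add_smul_sq (σ : ℝ) (x v : E) :
    ConvexOn ℝ {t : ℝ | ‖x + t • v‖ ^ 2 ≤ σ ^ 2}
      (fun t => 1 - exp (-‖x + t • v‖ ^ 2 / (2 * σ ^ 2))) := by
  have hline (t : ℝ) : HasDerivAt (fun t : ℝ => x + t • v) v t := by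
    simpa using ((hasDerivAt_id t).smul_const v).const_add x
  have hu (t : ℝ) : HasDerivAt (fun t => ‖x + t • v‖ ^ 2 / (2 * σ ^ 2))
      (inner ℝ (x + t • v) v / σ ^ 2) t :=
    ((hline t).norm_sq.div_const _).congr_deriv (by ring)
  have hu' (t : ℝ) :
      HasDerivAt (fun t => inner ℝ (x + t • v) v / σ ^ 2) (‖v‖ ^ 2 / σ ^ 2) t := by
    simpa [real_inner_self_eq_norm_sq] using ((hline t).inner ℝ (hasDerivAt_const t v)).div_const _
  simp_rw [neg_div]
  refine convexOn_one_sub_exp_neg ((convex_setOf_norm_sq_le σ).setOf_add_smul_mem x v) hu hu'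
    fun t ht => ?_
  have hnorm : ‖x + t • v‖ ^ 2 ≤ σ ^ 2 :=
    interior_subset (s := {t : ℝ | ‖x + t • v‖ ^ 2 ≤ σ ^ 2}) ht
  have hcs : inner ℝ (x + t • v) v ^ 2 ≤ ‖v‖ ^ 2 * σ ^ 2 := calc
    inner ℝ (x + t • v) v ^ 2 ≤ (‖x + t • v‖ * ‖v‖) ^ 2 := by
      rw [← sq_abs]; gcongr; exact abs_real_inner_le_norm _ _
    _ = ‖v‖ ^ 2 * ‖x + t • v‖ ^ 2 := by ring
    _ ≤ ‖v‖ ^ 2 * σ ^ 2 := by gcongr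
  calc (inner ℝ (x + t • v) v / σ ^ 2) ^ 2 = inner ℝ (x + t • v) v ^ 2 / σ ^ 2 / σ ^ 2 := by ring
    _ ≤ ‖v‖ ^ 2 / σ ^ 2 := by
      gcongr; exact div_le_of_le_mul₀ (sq_nonneg _) (sq_nonneg _) hcs

theorem convexOn_one_sub_exp_neg_norm_sq (σ : ℝ) :
    ConvexOn ℝ {x : E | ‖x‖ ^ 2 ≤ σ ^ 2} (fun x => 1 - exp (-‖x‖ ^ 2 / (2 * σ ^ 2))) :=
  convexOn_of_forall_convexOn_comp_line fun x _ v =>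
    convexOn_one_sub_exp_neg_norm_add_smul_sq σ x v

end InnerProductSpace

theorem single_group_sl0_convexOn_ball_general (n : ℕ) (σ : ℝ) :
    ConvexOn ℝ {x : Fin n → ℝ | ∑ i, x i ^ 2 ≤ σ ^ 2}
      (fun x : Fin n → ℝ => 1 - Real.exp (-(∑ i, x i ^ 2) / (2 * σ ^ 2))) := by
  simpa [Function.comp_def, EuclideanSpace.real_norm_sq_eq] using
    (convexOn_one_sub_exp_neg_norm_sq (E := EuclideanSpace ℝ (Fin n)) σ).comp_linearMap
      (WithLp.linearEquiv 2 ℝ (Fin n → ℝ)).symm.toLinearMap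

theorem single_group_sl0_convexOn_ball (n : ℕ) (σ : ℝ) (hσ : 0 < σ) :
    ConvexOn ℝ {x : Fin n → ℝ | ∑ i, x i ^ 2 ≤ σ ^ 2}
      (fun x : Fin n → ℝ => 1 - Real.exp (-(∑ i, x i ^ 2) / (2 * σ ^ 2))) :=
  single_group_sl0_convexOn_ball_general n σ
end

section
/- The gradient of the LSEAp function at a point x with all coordinates nonzero has k-th component sgn(xₖ)·exp(p(|xₖ| − ‖x‖_∞)) / Σᵢ exp(p(|xᵢ| − ‖x‖_∞)), and each component has absolute value at most 1; moreover the components' absolute values sum to 1. -/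
/-!
Away from the coordinate hyperplanes `d|t| = sign t · dt`, so the chain rule gives
`∂ₖ (1/p) log ∑ᵢ exp (p |yᵢ|) = sign xₖ · exp (p |xₖ|) / ∑ᵢ exp (p |xᵢ|)`,
a softmax weight with a sign.
Shifting every exponent by `-p ‖x‖` multiplies numerator and denominator by the same factor, and
softmax weights are positive and sum to one.
-/

open Real Finset

namespace Real

lemma coe_signType_sign (r : ℝ) : (SignType.sign r : ℝ) = Real.sign r := by
  rcases lt_trichotomy r 0 with h | rfl | h
  · simp [h, Real.sign_of_neg]
  · simp
  · simp [h, Real.sign_of_pos]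

lemma abs_sign_of_ne_zero {r : ℝ} (hr : r ≠ 0) : |Real.sign r| = 1 := by
  rcases sign_apply_eq_of_ne_zero r hr with h | h <;> simp [h]

end Real

section

variable {ι : Type*} [Fintype ι]

lemma hasFDerivAt_exp_mul_abs_apply (p : ℝ) {x : ι → ℝ} {i : ι} (hx : x i ≠ 0) :
    HasFDerivAt (fun y : ι → ℝ => exp (p * |y i|))
      ((p * Real.sign (x i) * exp (p * |x i|)) •
        (ContinuousLinearMap.proj i : (ι → ℝ) →L[ℝ] ℝ)) x := by
  have := ((HasFDerivAt.abs (hasFDerivAt_apply (𝕜 := ℝ) i x) hx).const_mul p).exp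
  rwa [Real.coe_signType_sign, smul_smul, smul_smul, mul_comm (exp _), mul_right_comm] at this

lemma hasFDerivAt_log_sum_exp_mul_abs [Nonempty ι] (p : ℝ) {x : ι → ℝ} (hx : ∀ i, x i ≠ 0) :
    HasFDerivAt (fun y : ι → ℝ => log (∑ i, exp (p * |y i|)))
      ((∑ i, exp (p * |x i|))⁻¹ •
        ∑ i, (p * Real.sign (x i) * exp (p * |x i|)) •
          (ContinuousLinearMap.proj i : (ι → ℝ) →L[ℝ] ℝ)) x :=
  (HasFDerivAt.fun_sum fun i _ => hasFDerivAt_exp_mul_abs_apply p (hx i)).log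
    (sum_pos (fun _ _ => exp_pos _) univ_nonempty).ne'

lemma fderiv_one_div_mul_log_sum_exp_mul_abs_single [DecidableEq ι] {p : ℝ} (hp : p ≠ 0)
    {x : ι → ℝ} (hx : ∀ i, x i ≠ 0) (k : ι) :
    fderiv ℝ (fun y : ι → ℝ => (1 / p) * log (∑ i, exp (p * |y i|))) x (Pi.single k 1) =
      Real.sign (x k) * exp (p * |x k|) / ∑ i, exp (p * |x i|) := by
  have : Nonempty ι := ⟨k⟩
  rw [((hasFDerivAt_log_sum_exp_mul_abs p hx).const_mul (1 / p)).fderiv]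
  simp only [smul_apply, _root_.sum_apply, ContinuousLinearMap.proj_apply, smul_eq_mul,
    Pi.single_apply, mul_ite, mul_one, mul_zero, sum_ite_eq', mem_univ, if_true]
  field_simp

lemma mul_exp_sub_div_sum_exp_sub (s c : ℝ) (a : ι → ℝ) (k : ι) :
    s * exp (a k - c) / ∑ i, exp (a i - c) = s * exp (a k) / ∑ i, exp (a i) := by
  simp only [exp_sub, ← sum_div, mul_div_assoc', div_div_div_cancel_right₀ (exp_pos c).ne']

lemma abs_sign_mul_exp_div_sum_exp {r : ℝ} (hr : r ≠ 0) (a : ι → ℝ) (k : ι) :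
    |Real.sign r * exp (a k) / ∑ i, exp (a i)| = exp (a k) / ∑ i, exp (a i) := by
  rw [abs_div, abs_mul, Real.abs_sign_of_ne_zero hr, one_mul, abs_exp,
    abs_of_nonneg (sum_nonneg fun _ _ => (exp_pos _).le)]

lemma exp_div_sum_exp_le_one (a : ι → ℝ) (k : ι) : exp (a k) / ∑ i, exp (a i) ≤ 1 :=
  div_le_one_of_le₀ (single_le_sum (fun i _ => (exp_pos (a i)).le) (mem_univ k))
    (sum_nonneg fun _ _ => (exp_pos _).le)

lemma sum_exp_div_sum_exp [Nonempty ι] (a : ι → ℝ) : ∑ k, exp (a k) / ∑ i, exp (a i) = 1 := by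
  rw [← sum_div, div_self (sum_pos (fun _ _ => exp_pos _) univ_nonempty).ne']

end

theorem lseap_gradient (N : ℕ) (p : ℝ) (hp : 0 < p) (x : Fin N → ℝ)
    (hx : ∀ i, x i ≠ 0) :
    (∀ k : Fin N,
        fderiv ℝ (fun y : Fin N → ℝ => (1 / p) * Real.log (∑ i, Real.exp (p * |y i|))) x
            (Pi.single k 1) =
          Real.sign (x k) * Real.exp (p * (|x k| - ‖x‖)) /
            ∑ i, Real.exp (p * (|x i| - ‖x‖))) ∧
    (∀ k : Fin N,
        |Real.sign (x k) * Real.exp (p * (|x k| - ‖x‖)) /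
            ∑ i, Real.exp (p * (|x i| - ‖x‖))| ≤ 1) ∧
    (0 < N →
      ∑ k, |Real.sign (x k) * Real.exp (p * (|x k| - ‖x‖)) /
          ∑ i, Real.exp (p * (|x i| - ‖x‖))| = 1) := by
  set a : Fin N → ℝ := fun i => p * (|x i| - ‖x‖)
  have habs k : |Real.sign (x k) * exp (a k) / ∑ i, exp (a i)| = exp (a k) / ∑ i, exp (a i) :=
    abs_sign_mul_exp_div_sum_exp (hx k) a k
  refine ⟨fun k => ?_, fun k => (habs k).trans_le (exp_div_sum_exp_le_one a k), fun hN => ?_⟩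
  · simp only [mul_sub]
    exact (fderiv_one_div_mul_log_sum_exp_mul_abs_single hp.ne' hx k).trans
      (mul_exp_sub_div_sum_exp_sub _ _ (fun i => p * |x i|) k).symm
  · have : Nonempty (Fin N) := Fin.pos_iff_nonempty.mp hN
    exact (sum_congr rfl fun k _ => habs k).trans (sum_exp_div_sum_exp a)
end

section
/- If x ∈ ℝ^N has a unique coordinate j of maximal absolute value (i.e., |xⱼ| > |xᵢ| for all i ≠ j) and all coordinates are nonzero, then as p → ∞ the gradient of LSEAp(·; p) at x converges to the vector sgn(xⱼ)·eⱼ, which is the gradient of the ℓ_∞ norm at x. -/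
/-!
Write `a i = |x i|`, so that `‖x‖ = a j`. Every exponent `p * (a i - a j)` with `i ≠ j` tends to
`-∞` while the one with `i = j` vanishes, so the softmax weights concentrate on `j`. For the
derivative, the strict maximality of `|x j|` persists near `x`, where the sup norm therefore
coincides with `y ↦ |y j|`, which is differentiable because `x j ≠ 0`.
-/

open Filter Topology

section SupNorm

variable {ι : Type*} [Fintype ι]

theorem pi_norm_eq_norm_of_forall_norm_le {E : Type*} [SeminormedAddGroup E] {f : ι → E} {j : ι}
    (h : ∀ i, ‖f i‖ ≤ ‖f j‖) : ‖f‖ = ‖f j‖ :=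
  le_antisymm ((pi_norm_le_iff_of_nonneg (norm_nonneg _)).2 h) (norm_le_pi_norm f j)

theorem eventually_forall_abs_le_abs {x : ι → ℝ} {j : ι} (hj : ∀ i, i ≠ j → |x i| < |x j|) :
    ∀ᶠ y in 𝓝 x, ∀ i, |y i| ≤ |y j| := by
  refine eventually_all.2 fun i => ?_
  rcases eq_or_ne i j with rfl | hij
  · exact .of_forall fun _ => le_rfl
  · have hcont : ∀ k, Continuous fun y : ι → ℝ => |y k| := fun k => (continuous_apply k).abs
    exact ((hcont i).continuousAt.eventually_lt (hcont j).continuousAt (hj i hij)).mono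
      fun _ => le_of_lt

theorem Real.sign_eq_coe_sign {r : ℝ} (hr : r ≠ 0) : Real.sign r = (SignType.sign r : ℝ) := by
  rcases hr.lt_or_gt with h | h
  · simp [Real.sign_of_neg h, _root_.sign_neg h]
  · simp [Real.sign_of_pos h, _root_.sign_pos h]

theorem hasFDerivAt_pi_norm_of_abs_lt {x : ι → ℝ} {j : ι} (hxj : x j ≠ 0)
    (hj : ∀ i, i ≠ j → |x i| < |x j|) :
    HasFDerivAt (fun y : ι → ℝ => ‖y‖)
      (Real.sign (x j) • (ContinuousLinearMap.proj j : (ι → ℝ) →L[ℝ] ℝ)) x := by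
  have habs : HasFDerivAt (fun y : ι → ℝ => |y j|)
      (Real.sign (x j) • (ContinuousLinearMap.proj j : (ι → ℝ) →L[ℝ] ℝ)) x := by
    rw [Real.sign_eq_coe_sign hxj]
    exact (hasDerivAt_abs hxj).comp_hasFDerivAt x
      (ContinuousLinearMap.proj j : (ι → ℝ) →L[ℝ] ℝ).hasFDerivAt
  exact habs.congr_of_eventuallyEq
    ((eventually_forall_abs_le_abs hj).mono fun _ h => pi_norm_eq_norm_of_forall_norm_le h)

end SupNorm

section Softmax

variable {ι : Type*} [DecidableEq ι] {a : ι → ℝ} {j : ι}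

theorem tendsto_exp_mul_sub_of_forall_lt (h : ∀ i, i ≠ j → a i < a j) (i : ι) :
    Tendsto (fun p : ℝ => Real.exp (p * (a i - a j))) atTop (𝓝 ((Pi.single j 1 : ι → ℝ) i)) := by
  rcases eq_or_ne i j with rfl | hij
  · simp
  · rw [Pi.single_eq_of_ne hij]
    exact Real.tendsto_exp_atBot.comp
      (tendsto_id.atTop_mul_const_of_neg (sub_neg.2 (h i hij)))

theorem tendsto_mul_softmax_of_forall_lt [Fintype ι] (c : ι → ℝ) (h : ∀ i, i ≠ j → a i < a j) :
    Tendsto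
      (fun p : ℝ => fun k : ι =>
        c k * Real.exp (p * (a k - a j)) / ∑ i, Real.exp (p * (a i - a j)))
      atTop (𝓝 (Pi.single j (c j))) := by
  have hsum : Tendsto (fun p : ℝ => ∑ i, Real.exp (p * (a i - a j))) atTop (𝓝 1) := by
    simpa using tendsto_finsetSum Finset.univ fun i _ => tendsto_exp_mul_sub_of_forall_lt h i
  refine tendsto_pi_nhds.2 fun k => ?_
  have hk := ((tendsto_exp_mul_sub_of_forall_lt h k).const_mul (c k)).div hsum one_ne_zero
  rcases eq_or_ne k j with rfl | hkj
  · simpa [Pi.div_def] using hk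
  · simpa [Pi.single_eq_of_ne hkj, Pi.div_def] using hk

end Softmax

theorem lseap_gradient_tendsto_linf_grad (N : ℕ) (x : Fin N → ℝ) (j : Fin N)
    (hx : ∀ i, x i ≠ 0) (hj : ∀ i, i ≠ j → |x i| < |x j|) :
    Tendsto
      (fun p : ℝ => fun k : Fin N =>
        Real.sign (x k) * Real.exp (p * (|x k| - ‖x‖)) /
          ∑ i, Real.exp (p * (|x i| - ‖x‖)))
      atTop (nhds (Pi.single j (Real.sign (x j)))) ∧
    HasFDerivAt (fun y : Fin N → ℝ => ‖y‖)
      (Real.sign (x j) • (ContinuousLinearMap.proj j : (Fin N → ℝ) →L[ℝ] ℝ)) x := by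
  have hnorm : ‖x‖ = |x j| := pi_norm_eq_norm_of_forall_norm_le fun i =>
    (eq_or_ne i j).elim (fun hij => hij ▸ le_rfl) fun hij => (hj i hij).le
  rw [hnorm]
  exact ⟨tendsto_mul_softmax_of_forall_lt (fun k => Real.sign (x k)) hj,
    hasFDerivAt_pi_norm_of_abs_lt (hx j) hj⟩
end
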